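/- In the three-level normal hierarchical model, for each node index j, the marginal law of the weighted sum Σ_{k≠j} c_{jk} Z_{jk} (pushforward of the joint law under z ↦ Σ_{k≠j} c_{jk} z_{jk}) equals the Gaussian measure with mean m0·Σ_{k≠j} c_{jk} and variance (Σ_{k≠j} c_{jk})·(c0 + Σ_{k≠j} c_{jk})/c0 (equivalently, precision c0 / ((Σ_{k≠j} c_{jk})(c0 + Σ_{k≠j} c_{jk}))). -/

import Mathlib

open MeasureTheory ProbabilityTheory

noncomputable section

/-- Index type for unordered pairs `j < k` of nodes. -/
abbrev PairIdx (p : ℕ) := {q : Fin p × Fin p // q.1 < q.2}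

/-- Symmetric extension of a function defined on pairs `j < k`. -/
def symExt {p : ℕ} (z : PairIdx p → ℝ) (j k : Fin p) : ℝ :=
  if h : j < k then z ⟨(j, k), h⟩ else if h' : k < j then z ⟨(k, j), h'⟩ else 0

/-- The joint law of `(W, (Z_{jk})_{j<k}, (Y_1,…,Y_p))` in the three-level normal
hierarchical model: `W ~ N(m0, 1/c0)`; given `W = w`, the `Z_{jk}` are independent
`N(w, 1/c_{jk})`; given `Z = z` (extended symmetrically), the `Y_j` are independent
`N((c0 m0 + ∑_{k≠j} c_{jk} z_{jk})/(c0 + ∑_{k≠j} c_{jk}), 1/(c0 + ∑_{k≠j} c_{jk}))`. -/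
def normalHierJoint (p : ℕ) (m0 c0 : ℝ) (c : Fin p → Fin p → ℝ) :
    Measure (ℝ × (PairIdx p → ℝ) × (Fin p → ℝ)) :=
  (gaussianReal m0 (1 / c0).toNNReal).bind fun w =>
    (Measure.pi fun q : PairIdx p =>
        gaussianReal w (1 / c q.1.1 q.1.2).toNNReal).bind fun z =>
      (Measure.pi fun j : Fin p =>
          gaussianReal
            ((c0 * m0 + ∑ k ∈ Finset.univ.erase j, c j k * symExt z j k) /
              (c0 + ∑ k ∈ Finset.univ.erase j, c j k))
            (1 / (c0 + ∑ k ∈ Finset.univ.erase j, c j k)).toNNReal).map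
        fun y => (w, z, y)

/-! Given `W = w`, the weighted sum `∑_{k≠j} c_{jk} Z_{jk}` only involves the independent
coordinates `Z_{jk} ~ N(w, 1/c_{jk})`, so it is `N(A w, ∑_{k≠j} c_{jk}² / c_{jk}) = N(A w, A)`
with `A = ∑_{k≠j} c_{jk}`; the `Y`-level integrates out. Mixing over `W ~ N(m0, 1/c0)` is the
convolution of the law `N(A m0, A² / c0)` of `A W` with `N(0, A)`, which gives
`N(A m0, A² / c0 + A)`. -/

open scoped NNReal

namespace MeasureTheory.Measure

variable {α β γ : Type*} [MeasurableSpace α] [MeasurableSpace β] [MeasurableSpace γ]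

lemma map_bind (μ : Measure α) {κ : α → Measure β} (hκ : Measurable κ) {f : β → γ}
    (hf : Measurable f) :
    (μ.bind κ).map f = μ.bind fun a => (κ a).map f := by
  have hδf : Measurable fun b => dirac (f b) := measurable_dirac.comp hf
  rw [← bind_dirac_eq_map _ hf, bind_bind hκ.aemeasurable hδf.aemeasurable]
  simp_rw [bind_dirac_eq_map _ hf]

lemma bind_map (μ : Measure α) {f : α → β} (hf : Measurable f) {κ : β → Measure γ}
    (hκ : Measurable κ) :
    (μ.map f).bind κ = μ.bind fun a => κ (f a) := by
  have hδf : Measurable fun a => dirac (f a) := measurable_dirac.comp hf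
  rw [← bind_dirac_eq_map _ hf, bind_bind hδf.aemeasurable hκ.aemeasurable]
  simp_rw [dirac_bind hκ]

end MeasureTheory.Measure

namespace ProbabilityTheory.Kernel

variable {α β γ δ : Type*} [MeasurableSpace α] [MeasurableSpace β] [MeasurableSpace γ]
  [MeasurableSpace δ]

lemma measurable_map_of_measurable_uncurry (κ : Kernel α β) [IsSFiniteKernel κ]
    {g : α → β → γ} (hg : Measurable (Function.uncurry g)) :
    Measurable fun a => (κ a).map (g a) := by
  refine Measure.measurable_of_measurable_coe _ fun s hs => ?_
  have h (a : α) : (κ a).map (g a) s = κ a (Prod.mk a ⁻¹' (Function.uncurry g ⁻¹' s)) :=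
    Measure.map_apply (hg.comp measurable_prodMk_left) hs
  simpa only [h] using κ.measurable_kernel_prodMk_left (hg hs)

lemma map_bind_bind_map_eq_bind_map (μ : Measure α) (P : Kernel α β) [IsSFiniteKernel P]
    (Q : Kernel (α × β) γ) [IsMarkovKernel Q] {f : β → δ} (hf : Measurable f) :
    (μ.bind fun a => (P a).bind fun b => (Q (a, b)).map fun c => (a, b, c)).map
        (fun x => f x.2.1) =
      μ.bind fun a => (P a).map f := by
  have hQ : Measurable fun ab : α × β => (Q ab).map fun c => (ab.1, ab.2, c) :=
    Q.measurable_map_of_measurable_uncurry (by fun_prop)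
  have hF : Measurable fun x : α × β × γ => f x.2.1 := by fun_prop
  have hPQ : Measurable fun a => (P a).bind fun b => (Q (a, b)).map fun c => (a, b, c) := by
    have hgraph : Measurable fun a => (P a).map (Prod.mk a) :=
      P.measurable_map_of_measurable_uncurry measurable_id
    simp_rw [← Measure.bind_map _ measurable_prodMk_left hQ]
    exact (Measure.measurable_bind' hQ).comp hgraph
  rw [Measure.map_bind μ hPQ hF]
  congr 1 with a : 1
  have hQa : Measurable fun b => (Q (a, b)).map fun c => (a, b, c) :=
    hQ.comp measurable_prodMk_left
  rw [Measure.map_bind _ hQa hF, ← Measure.bind_dirac_eq_map _ hf]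
  congr 1 with b : 1
  rw [Measure.map_map hF (by fun_prop)]
  simp [Function.comp_def]

end ProbabilityTheory.Kernel

namespace ProbabilityTheory

variable {ι : Type*} [Fintype ι]

lemma pi_gaussianReal_eq_map_add (m : ι → ℝ) (v : ι → ℝ≥0) :
    Measure.pi (fun i => gaussianReal (m i) (v i)) =
      (Measure.pi fun i => gaussianReal 0 (v i)).map fun y i => m i + y i := by
  rw [Measure.pi_map_pi (fun i => (measurable_const_add (m i)).aemeasurable)]
  simp_rw [gaussianReal_map_const_add, zero_add]

lemma measurable_pi_gaussianReal {α : Type*} [MeasurableSpace α] {m : α → ι → ℝ}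
    (hm : Measurable m) (v : ι → ℝ≥0) :
    Measurable fun a => Measure.pi fun i => gaussianReal (m a i) (v i) := by
  have h (a : α) := pi_gaussianReal_eq_map_add (m a) v
  simp only [h]
  exact (Kernel.const α _).measurable_map_of_measurable_uncurry (by fun_prop)

lemma pi_gaussianReal_map_sum (m : ι → ℝ) (v : ι → ℝ≥0) :
    (Measure.pi fun i => gaussianReal (m i) (v i)).map (fun x => ∑ i, x i) =
      gaussianReal (∑ i, m i) (∑ i, v i) := by
  refine Measure.ext_of_charFun ?_
  rw [charFun_map_sum_pi_eq_prod]
  ext t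
  simp only [Finset.prod_apply, charFun_gaussianReal, ← Complex.exp_sum]
  push_cast
  congr 1
  rw [Finset.sum_sub_distrib, Finset.sum_mul, Finset.mul_sum, Finset.sum_mul, Finset.sum_div]

lemma pi_gaussianReal_map_weightedSum (a m : ι → ℝ) (v : ι → ℝ≥0) :
    (Measure.pi fun i => gaussianReal (m i) (v i)).map (fun x => ∑ i, a i * x i) =
      gaussianReal (∑ i, a i * m i) (∑ i, NNReal.mk (a i ^ 2) (sq_nonneg _) * v i) := by
  have hscale : (Measure.pi fun i => gaussianReal (m i) (v i)).map (fun x i => a i * x i) =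
      Measure.pi fun i => gaussianReal (a i * m i) (NNReal.mk (a i ^ 2) (sq_nonneg _) * v i) := by
    rw [Measure.pi_map_pi (fun i => (measurable_const_mul (a i)).aemeasurable)]
    simp_rw [gaussianReal_map_const_mul]
  rw [← pi_gaussianReal_map_sum, ← hscale, Measure.map_map (by fun_prop) (by fun_prop)]
  rfl

lemma bind_gaussianReal_eq_conv (μ : Measure ℝ) [SFinite μ] (v : ℝ≥0) :
    μ.bind (fun u => gaussianReal u v) = μ ∗ gaussianReal 0 v := by
  rw [Measure.conv, Measure.prod_def,
    Measure.map_bind _ Measurable.map_prodMk_left (by fun_prop)]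
  congr 1 with u : 1
  rw [Measure.map_map (by fun_prop) measurable_prodMk_left]
  simpa [Function.comp_def] using (gaussianReal_map_const_add (μ := 0) (v := v) u).symm

lemma gaussianReal_bind_gaussianReal_const_mul (m a : ℝ) (v₁ v₂ : ℝ≥0) :
    (gaussianReal m v₁).bind (fun w => gaussianReal (a * w) v₂) =
      gaussianReal (a * m) (NNReal.mk (a ^ 2) (sq_nonneg _) * v₁ + v₂) := by
  have hmeas : Measurable fun u => gaussianReal u v₂ := by fun_prop
  rw [← Measure.bind_map _ (measurable_const_mul a) hmeas, gaussianReal_map_const_mul,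
    bind_gaussianReal_eq_conv, gaussianReal_conv_gaussianReal, add_zero]

end ProbabilityTheory

section Pairs

variable {p : ℕ}

@[fun_prop]
lemma measurable_symExt (j k : Fin p) : Measurable fun z : PairIdx p → ℝ => symExt z j k := by
  unfold symExt
  split_ifs <;> fun_prop

lemma symExt_const {j k : Fin p} (hjk : j ≠ k) (x : ℝ) : symExt (fun _ => x) j k = x := by
  unfold symExt
  split_ifs <;> first | rfl | omega

lemma symExt_eq_sum_single (z : PairIdx p → ℝ) (j k : Fin p) :
    symExt z j k = ∑ q, symExt (Pi.single q 1) j k * z q := by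
  unfold symExt
  split_ifs <;> simp [Pi.single_apply]

lemma symExt_single (q : PairIdx p) (j k : Fin p) :
    symExt (Pi.single q 1) j k =
      (if q.1.1 = j ∧ q.1.2 = k then 1 else 0) + (if q.1.1 = k ∧ q.1.2 = j then 1 else 0) := by
  obtain ⟨⟨a, b⟩, hab⟩ := q
  unfold symExt
  simp only [Pi.single_apply, Subtype.ext_iff, Prod.ext_iff]
  split_ifs <;> grind

def starWeight (c : Fin p → Fin p → ℝ) (j : Fin p) (q : PairIdx p) : ℝ :=
  (if q.1.1 = j then c j q.1.2 else 0) + (if q.1.2 = j then c j q.1.1 else 0)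

lemma sum_mul_symExt_eq_sum_starWeight_mul (c : Fin p → Fin p → ℝ) (j : Fin p)
    (z : PairIdx p → ℝ) :
    ∑ k ∈ Finset.univ.erase j, c j k * symExt z j k = ∑ q, starWeight c j q * z q := by
  simp_rw [symExt_eq_sum_single z j, Finset.mul_sum]
  rw [Finset.sum_comm]
  refine Finset.sum_congr rfl fun q _ => ?_
  have hq : q.1.1 ≠ q.1.2 := q.2.ne
  simp_rw [← mul_assoc, ← Finset.sum_mul, symExt_single, mul_add, mul_ite, mul_one, mul_zero,
    Finset.sum_add_distrib, starWeight]
  congr 2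
  · by_cases h : q.1.1 = j
    · subst h; simp [hq.symm]
    · simp [h]
  · by_cases h : q.1.2 = j
    · subst h; simp [hq]
    · simp [h]

lemma sum_starWeight (c : Fin p → Fin p → ℝ) (j : Fin p) :
    ∑ q, starWeight c j q = ∑ k ∈ Finset.univ.erase j, c j k := by
  have h := sum_mul_symExt_eq_sum_starWeight_mul c j fun _ => 1
  simp only [mul_one] at h
  rw [← h]
  refine Finset.sum_congr rfl fun k hk => ?_
  rw [symExt_const (Finset.ne_of_mem_erase hk).symm, mul_one]

lemma starWeight_sq_mul_one_div {c : Fin p → Fin p → ℝ} (hsym : ∀ j k, c k j = c j k)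
    (j : Fin p) {q : PairIdx p} (hq : c q.1.1 q.1.2 ≠ 0) :
    starWeight c j q ^ 2 * (1 / c q.1.1 q.1.2) = starWeight c j q := by
  have hne : q.1.1 ≠ q.1.2 := q.2.ne
  unfold starWeight
  split_ifs with h₁ h₂ h₂
  · exact absurd (h₁.trans h₂.symm) hne
  · subst h₁; field_simp; ring
  · rw [← h₂, hsym q.1.1 q.1.2]; field_simp; ring
  · ring

end Pairs

lemma pi_gaussianReal_map_sum_mul_symExt {p : ℕ} {c : Fin p → Fin p → ℝ}
    (hc : ∀ j k, j ≠ k → 0 < c j k) (hsym : ∀ j k, c k j = c j k) (j : Fin p) (w : ℝ) :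
    (Measure.pi fun q : PairIdx p => gaussianReal w (1 / c q.1.1 q.1.2).toNNReal).map
        (fun z => ∑ k ∈ Finset.univ.erase j, c j k * symExt z j k) =
      gaussianReal ((∑ k ∈ Finset.univ.erase j, c j k) * w)
        (∑ k ∈ Finset.univ.erase j, c j k).toNNReal := by
  have hcq (q : PairIdx p) : 0 < c q.1.1 q.1.2 := hc _ _ q.2.ne
  simp_rw [sum_mul_symExt_eq_sum_starWeight_mul, pi_gaussianReal_map_weightedSum,
    ← Finset.sum_mul, sum_starWeight]
  congr 1
  ext
  have hvar (q : PairIdx p) :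
      ((NNReal.mk (starWeight c j q ^ 2) (sq_nonneg _) * (1 / c q.1.1 q.1.2).toNNReal :
        ℝ≥0) : ℝ) = starWeight c j q := by
    rw [NNReal.coe_mul, NNReal.coe_mk, Real.coe_toNNReal _ (one_div_pos.2 (hcq q)).le,
      starWeight_sq_mul_one_div hsym j (hcq q).ne']
  have hA : 0 ≤ ∑ k ∈ Finset.univ.erase j, c j k :=
    Finset.sum_nonneg fun k hk => (hc j k (Finset.ne_of_mem_erase hk).symm).le
  rw [NNReal.coe_sum, Finset.sum_congr rfl fun q _ => hvar q, sum_starWeight,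
    Real.coe_toNNReal _ hA]

lemma normalHierJoint_map_pairs {γ : Type*} [MeasurableSpace γ] (p : ℕ) (m0 c0 : ℝ)
    (c : Fin p → Fin p → ℝ) {g : (PairIdx p → ℝ) → γ} (hg : Measurable g) :
    (normalHierJoint p m0 c0 c).map (fun x => g x.2.1) =
      (gaussianReal m0 (1 / c0).toNNReal).bind fun w =>
        (Measure.pi fun q : PairIdx p => gaussianReal w (1 / c q.1.1 q.1.2).toNNReal).map g := by
  let P : Kernel ℝ (PairIdx p → ℝ) :=
    ⟨fun w => Measure.pi fun q => gaussianReal w (1 / c q.1.1 q.1.2).toNNReal,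
      measurable_pi_gaussianReal (by fun_prop) _⟩
  let Q : Kernel (ℝ × (PairIdx p → ℝ)) (Fin p → ℝ) :=
    ⟨fun wz => Measure.pi fun i => gaussianReal
        ((c0 * m0 + ∑ k ∈ Finset.univ.erase i, c i k * symExt wz.2 i k) /
          (c0 + ∑ k ∈ Finset.univ.erase i, c i k))
        (1 / (c0 + ∑ k ∈ Finset.univ.erase i, c i k)).toNNReal,
      measurable_pi_gaussianReal (by fun_prop) _⟩
  have : IsMarkovKernel P := ⟨fun _ => inferInstanceAs (IsProbabilityMeasure (Measure.pi _))⟩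
  have : IsMarkovKernel Q := ⟨fun _ => inferInstanceAs (IsProbabilityMeasure (Measure.pi _))⟩
  exact Kernel.map_bind_bind_map_eq_bind_map _ P Q hg

theorem normalHier_marginal_weightedSum_general (p : ℕ) (m0 c0 : ℝ) (hc0 : 0 < c0)
    (c : Fin p → Fin p → ℝ) (hc : ∀ j k, j ≠ k → 0 < c j k)
    (hsym : ∀ j k, c k j = c j k) (j : Fin p) :
    (normalHierJoint p m0 c0 c).map
        (fun x => ∑ k ∈ Finset.univ.erase j, c j k * symExt x.2.1 j k) =
      gaussianReal (m0 * ∑ k ∈ Finset.univ.erase j, c j k)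
        ((∑ k ∈ Finset.univ.erase j, c j k) *
            (c0 + ∑ k ∈ Finset.univ.erase j, c j k) / c0).toNNReal := by
  have hg : Measurable fun z => ∑ k ∈ Finset.univ.erase j, c j k * symExt z j k := by fun_prop
  rw [normalHierJoint_map_pairs p m0 c0 c hg]
  simp_rw [pi_gaussianReal_map_sum_mul_symExt hc hsym j]
  set A := ∑ k ∈ Finset.univ.erase j, c j k
  have hA : 0 ≤ A := Finset.sum_nonneg fun k hk => (hc j k (Finset.ne_of_mem_erase hk).symm).le
  rw [gaussianReal_bind_gaussianReal_const_mul, mul_comm A m0]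
  congr 1
  ext
  rw [NNReal.coe_add, NNReal.coe_mul, NNReal.coe_mk, Real.coe_toNNReal _ hA,
    Real.coe_toNNReal _ (by positivity), Real.coe_toNNReal _ (by positivity)]
  field_simp
  ring

/-- In the three-level normal hierarchical model, the marginal law of the weighted sum
`∑_{k≠j} c_{jk} Z_{jk}` equals the Gaussian measure with mean `m0 · ∑_{k≠j} c_{jk}` and
variance `(∑_{k≠j} c_{jk})(c0 + ∑_{k≠j} c_{jk})/c0`. -/
theorem normalHier_marginal_weightedSum (p : ℕ) (hp : 2 ≤ p) (m0 c0 : ℝ) (hc0 : 0 < c0)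
    (c : Fin p → Fin p → ℝ) (hc : ∀ j k, j ≠ k → 0 < c j k)
    (hsym : ∀ j k, c k j = c j k) (j : Fin p) :
    (normalHierJoint p m0 c0 c).map
        (fun x => ∑ k ∈ Finset.univ.erase j, c j k * symExt x.2.1 j k) =
      gaussianReal (m0 * ∑ k ∈ Finset.univ.erase j, c j k)
        ((∑ k ∈ Finset.univ.erase j, c j k) *
            (c0 + ∑ k ∈ Finset.univ.erase j, c j k) / c0).toNNReal :=
  normalHier_marginal_weightedSum_general p m0 c0 hc0 c hc hsym j
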